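/- Let m ≥ 2 and N ≥ 1 be integers, h = 1/N, ω > 0, and let C_0, …, C_N be real numbers satisfying ∑_{γ=0}^{N} C_γ sin(hωγ) = 0, ∑_{γ=0}^{N} C_γ cos(hωγ) = 0, and ∑_{γ=0}^{N} C_γ (hγ)^α = 0 for α = 0, 1, …, m−3. Then for every integer β ≤ 0: ∑_{γ=0}^{N} C_γ G_m(hβ − hγ) = −D₁ sin(hωβ) − D₂ cos(hωβ) − Q(hβ), where D₁ = ((−1)^m/(4ω^{2m−1})) ∑_{γ=0}^{N} C_γ (hωγ) sin(hωγ), D₂ = ((−1)^m/(4ω^{2m−1})) ∑_{γ=0}^{N} C_γ (hωγ) cos(hωγ), and Q(t) = ((−1)^m/(2ω^{2m−1})) ∑_{k=⌊m/2⌋}^{m−2} ∑_{α=m−2}^{2k−1} ((−1)^{k+α} (m−k−1) ω^{2k−1} / ((2k−1−α)! α!)) · t^{2k−1−α} · ∑_{γ=0}^{N} C_γ (hγ)^α, a polynomial of degree at most m−3 in t. -/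

import Mathlib

/-!
For `x ≤ 0` the kernel is `G_m(x) = -c · F(ωx)`, where `c = (-1)^m / (4ω^(2m-1))`,
`F(y) = (2m-3) sin y - y cos y + 2 P(y)` and `P` is an odd polynomial. Expanding `sin`, `cos` of `ω(hβ - hγ)` by the addition formulas,
the trigonometric conditions kill every term that is not weighted by `ωhγ`, which leaves the
`D₁`, `D₂` terms. Expanding `P(ω(hβ - hγ))` binomially gives moments `∑ C_γ (hγ)^α`; those of
order `< m - 2` vanish, and what survives is `Q(hβ)`.
-/

open Finset Real

noncomputable section

/-- The fundamental solution `G_m`. -/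
def Gm (m : ℕ) (ω : ℝ) (x : ℝ) : ℝ :=
  (-1 : ℝ) ^ m * Real.sign x / (4 * ω ^ (2 * m - 1)) *
    ((2 * (m : ℝ) - 3) * Real.sin (ω * x) - ω * x * Real.cos (ω * x)
      + 2 * ∑ k ∈ Finset.Icc 1 (m - 2),
          (-1 : ℝ) ^ k * ((m : ℝ) - (k : ℝ) - 1) * (ω * x) ^ (2 * k - 1)
            / (Nat.factorial (2 * k - 1)))

end

open scoped Nat

/-- `G_m(x) = (-1)^m sign x / (4ω^(2m-1)) · bracket m (ωx)`. -/
noncomputable def bracket (m : ℕ) (y : ℝ) : ℝ :=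
  (2 * (m : ℝ) - 3) * sin y - y * cos y
    + 2 * ∑ k ∈ Icc 1 (m - 2), (-1 : ℝ) ^ k * ((m : ℝ) - k - 1) * y ^ (2 * k - 1) / (2 * k - 1)!

/-- `Q` without its prefactor `(-1)^m / (2 ω^(2m-1))`, with `μ α` in place of the moments. -/
noncomputable def momentPoly (m : ℕ) (ω : ℝ) (μ : ℕ → ℝ) (a : ℝ) : ℝ :=
  ∑ k ∈ Icc (m / 2) (m - 2), ∑ α ∈ Icc (m - 2) (2 * k - 1),
    (-1 : ℝ) ^ (k + α) * ((m : ℝ) - k - 1) * ω ^ (2 * k - 1)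
      / ((2 * k - 1 - α)! * α !) * a ^ (2 * k - 1 - α) * μ α

theorem bracket_zero (m : ℕ) : bracket m 0 = 0 := by
  have hodd : ∀ k ∈ Icc 1 (m - 2),
      (-1 : ℝ) ^ k * ((m : ℝ) - k - 1) * 0 ^ (2 * k - 1) / (2 * k - 1)! = 0 := fun k hk => by
    rw [zero_pow (by grind), mul_zero, zero_div]
  simp [bracket, sum_eq_zero hodd]

theorem Gm_of_nonpos (m : ℕ) (ω : ℝ) {x : ℝ} (hx : x ≤ 0) :
    Gm m ω x = -((-1 : ℝ) ^ m / (4 * ω ^ (2 * m - 1))) * bracket m (ω * x) := by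
  rcases hx.lt_or_eq with hx | rfl
  · rw [Gm, Real.sign_of_neg hx, bracket]; ring
  · simp [Gm, bracket_zero]

section Binomial

variable {K : Type*} [Field K] [CharZero K]

theorem sub_pow_div_factorial (a t : K) (n : ℕ) :
    (a - t) ^ n / n ! = ∑ α ∈ range (n + 1), (-1 : K) ^ α * a ^ (n - α) / ((n - α)! * α !) * t ^ α := by
  rw [show a - t = -t + a by ring, add_pow, sum_div]
  refine sum_congr rfl fun α hα => ?_
  rw [Nat.cast_choose K (Nat.le_of_lt_succ (mem_range.1 hα)), neg_pow]
  field_simp [Nat.factorial_ne_zero]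

theorem sum_mul_sub_pow_div_factorial {ι : Type*} (s : Finset ι) (c t : ι → K) {M n : ℕ} (a : K)
    (hmom : ∀ α < M, ∑ i ∈ s, c i * t i ^ α = 0) :
    ∑ i ∈ s, c i * ((a - t i) ^ n / n !) =
      ∑ α ∈ Icc M n, (-1 : K) ^ α * a ^ (n - α) / ((n - α)! * α !) * ∑ i ∈ s, c i * t i ^ α := by
  simp_rw [sub_pow_div_factorial, mul_sum]
  rw [sum_comm]
  simp_rw [mul_left_comm (c _), ← mul_sum]
  refine (sum_subset (fun α hα => ?_) fun α hα hαM => ?_).symm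
  · simp only [mem_Icc, mem_range] at hα ⊢; omega
  · simp only [mem_Icc, mem_range, not_and, not_le] at hα hαM
    rw [hmom α (by omega), mul_zero]

end Binomial

section WeightedSums

variable {ι : Type*} (s : Finset ι) (c : ι → ℝ)

theorem sum_mul_sin_sub_eq_zero (u : ι → ℝ) (b : ℝ)
    (hsin : ∑ i ∈ s, c i * sin (u i) = 0) (hcos : ∑ i ∈ s, c i * cos (u i) = 0) :
    ∑ i ∈ s, c i * sin (b - u i) = 0 := by
  have hexp : ∀ i ∈ s, c i * sin (b - u i) = sin b * (c i * cos (u i)) - cos b * (c i * sin (u i)) :=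
    fun i _ => by rw [sin_sub]; ring
  rw [sum_congr rfl hexp, sum_sub_distrib, ← mul_sum, ← mul_sum, hsin, hcos]
  ring

theorem sum_mul_sub_mul_cos_sub (u : ι → ℝ) (b : ℝ)
    (hsin : ∑ i ∈ s, c i * sin (u i) = 0) (hcos : ∑ i ∈ s, c i * cos (u i) = 0) :
    ∑ i ∈ s, c i * ((b - u i) * cos (b - u i)) =
      -(∑ i ∈ s, c i * u i * sin (u i)) * sin b - (∑ i ∈ s, c i * u i * cos (u i)) * cos b := by
  have hexp : ∀ i ∈ s, c i * ((b - u i) * cos (b - u i)) =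
      b * cos b * (c i * cos (u i)) + b * sin b * (c i * sin (u i))
        - cos b * (c i * u i * cos (u i)) - sin b * (c i * u i * sin (u i)) :=
    fun i _ => by rw [cos_sub]; ring
  rw [sum_congr rfl hexp]
  simp only [sum_sub_distrib, sum_add_distrib, ← mul_sum, hsin, hcos]
  ring

variable (t : ι → ℝ)

theorem sum_mul_odd_part {m : ℕ} (hm : 2 ≤ m) (ω a : ℝ)
    (hmom : ∀ α : ℕ, α + 3 ≤ m → ∑ i ∈ s, c i * t i ^ α = 0) :
    ∑ i ∈ s, c i * ∑ k ∈ Icc 1 (m - 2),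
        (-1 : ℝ) ^ k * ((m : ℝ) - k - 1) * (ω * (a - t i)) ^ (2 * k - 1) / (2 * k - 1)! =
      momentPoly m ω (fun α => ∑ i ∈ s, c i * t i ^ α) a := by
  have hinner : ∀ k ∈ Icc 1 (m - 2), ∑ i ∈ s, c i *
      ((-1 : ℝ) ^ k * ((m : ℝ) - k - 1) * (ω * (a - t i)) ^ (2 * k - 1) / (2 * k - 1)!) =
      ∑ α ∈ Icc (m - 2) (2 * k - 1), (-1 : ℝ) ^ (k + α) * ((m : ℝ) - k - 1) * ω ^ (2 * k - 1)
        / ((2 * k - 1 - α)! * α !) * a ^ (2 * k - 1 - α) * ∑ i ∈ s, c i * t i ^ α := by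
    intro k _
    have hmom' : ∀ α < m - 2, ∑ i ∈ s, c i * t i ^ α = 0 := fun α hα => hmom α (by omega)
    calc _ = (-1 : ℝ) ^ k * ((m : ℝ) - k - 1) * ω ^ (2 * k - 1) *
          ∑ i ∈ s, c i * ((a - t i) ^ (2 * k - 1) / (2 * k - 1)!) := by
          rw [mul_sum]; exact sum_congr rfl fun i _ => by rw [mul_pow]; ring
      _ = _ := by
          rw [sum_mul_sub_pow_div_factorial s c t a hmom', mul_sum]
          exact sum_congr rfl fun α _ => by ring
  simp_rw [mul_sum]
  rw [sum_comm, sum_congr rfl hinner, momentPoly]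
  -- for `k < m / 2` the range `m - 2 ≤ α ≤ 2k - 1` is empty
  refine (sum_subset (fun k hk => ?_) fun k hk hkm => ?_).symm
  · simp only [mem_Icc] at hk ⊢; omega
  · simp only [mem_Icc, not_and, not_le] at hk hkm
    rw [Icc_eq_empty (by omega), sum_empty]

theorem sum_mul_bracket_sub {m : ℕ} (hm : 2 ≤ m) (ω a : ℝ)
    (hsin : ∑ i ∈ s, c i * sin (ω * t i) = 0) (hcos : ∑ i ∈ s, c i * cos (ω * t i) = 0)
    (hmom : ∀ α : ℕ, α + 3 ≤ m → ∑ i ∈ s, c i * t i ^ α = 0) :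
    ∑ i ∈ s, c i * bracket m (ω * (a - t i)) =
      (∑ i ∈ s, c i * (ω * t i) * sin (ω * t i)) * sin (ω * a)
        + (∑ i ∈ s, c i * (ω * t i) * cos (ω * t i)) * cos (ω * a)
        + 2 * momentPoly m ω (fun α => ∑ i ∈ s, c i * t i ^ α) a := by
  have hsplit : ∀ i ∈ s, c i * bracket m (ω * (a - t i)) =
      (2 * (m : ℝ) - 3) * (c i * sin (ω * a - ω * t i))
        - c i * ((ω * a - ω * t i) * cos (ω * a - ω * t i))
        + 2 * (c i * ∑ k ∈ Icc 1 (m - 2),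
          (-1 : ℝ) ^ k * ((m : ℝ) - k - 1) * (ω * (a - t i)) ^ (2 * k - 1) / (2 * k - 1)!) :=
    fun i _ => by rw [bracket, mul_sub]; ring
  rw [sum_congr rfl hsplit]
  simp only [sum_add_distrib, sum_sub_distrib, ← mul_sum]
  rw [sum_mul_sin_sub_eq_zero s c _ _ hsin hcos, sum_mul_sub_mul_cos_sub s c _ _ hsin hcos,
    sum_mul_odd_part s c t hm ω a hmom]
  ring

theorem sum_mul_Gm_sub_of_le (m : ℕ) (ω : ℝ) {a : ℝ} (hle : ∀ i ∈ s, a ≤ t i) :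
    ∑ i ∈ s, c i * Gm m ω (a - t i) =
      -((-1 : ℝ) ^ m / (4 * ω ^ (2 * m - 1))) * ∑ i ∈ s, c i * bracket m (ω * (a - t i)) := by
  rw [mul_sum]
  exact sum_congr rfl fun i hi => by
    rw [Gm_of_nonpos m ω (sub_nonpos.2 (hle i hi))]; ring

end WeightedSums

theorem convolution_left_of_nodes_general
    (m N : ℕ) (hm : 2 ≤ m) (h ω : ℝ) (hh : h = 1 / N)
    (Cc : ℕ → ℝ)
    (hsin : ∑ γ ∈ Finset.range (N + 1), Cc γ * Real.sin (h * ω * γ) = 0)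
    (hcos : ∑ γ ∈ Finset.range (N + 1), Cc γ * Real.cos (h * ω * γ) = 0)
    (hpoly : ∀ α : ℕ, α + 3 ≤ m → ∑ γ ∈ Finset.range (N + 1), Cc γ * (h * γ) ^ α = 0)
    (D₁ D₂ : ℝ) (Q : ℝ → ℝ)
    (hD1 : D₁ = (-1 : ℝ) ^ m / (4 * ω ^ (2 * m - 1)) *
        ∑ γ ∈ Finset.range (N + 1), Cc γ * (h * ω * γ) * Real.sin (h * ω * γ))
    (hD2 : D₂ = (-1 : ℝ) ^ m / (4 * ω ^ (2 * m - 1)) *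
        ∑ γ ∈ Finset.range (N + 1), Cc γ * (h * ω * γ) * Real.cos (h * ω * γ))
    (hQ : ∀ t : ℝ, Q t = (-1 : ℝ) ^ m / (2 * ω ^ (2 * m - 1)) *
        ∑ k ∈ Finset.Icc (m / 2) (m - 2), ∑ α ∈ Finset.Icc (m - 2) (2 * k - 1),
          (-1 : ℝ) ^ (k + α) * ((m : ℝ) - (k : ℝ) - 1) * ω ^ (2 * k - 1)
              / ((Nat.factorial (2 * k - 1 - α)) * (Nat.factorial α))
            * t ^ (2 * k - 1 - α)
            * ∑ γ ∈ Finset.range (N + 1), Cc γ * (h * γ) ^ α)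
    :
    ∀ β : ℤ, β ≤ 0 →
      ∑ γ ∈ Finset.range (N + 1), Cc γ * Gm m ω (h * (β : ℝ) - h * γ)
        = -D₁ * Real.sin (h * ω * (β : ℝ)) - D₂ * Real.cos (h * ω * (β : ℝ)) - Q (h * (β : ℝ)) := by
  intro β hβ
  have hh0 : 0 ≤ h := by rw [hh]; positivity
  have hle : ∀ γ ∈ range (N + 1), h * (β : ℝ) ≤ h * (γ : ℕ) := fun γ _ =>
    mul_le_mul_of_nonneg_left (by exact_mod_cast hβ.trans γ.cast_nonneg) hh0
  have hQβ : Q (h * β) = (-1 : ℝ) ^ m / (2 * ω ^ (2 * m - 1)) *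
      momentPoly m ω (fun α => ∑ γ ∈ range (N + 1), Cc γ * (h * γ) ^ α) (h * β) := hQ _
  have hscale : ∀ x : ℝ, h * ω * x = ω * (h * x) := fun x => by ring
  simp only [hscale] at hsin hcos hD1 hD2 ⊢
  rw [sum_mul_Gm_sub_of_le _ Cc _ m ω hle, sum_mul_bracket_sub _ Cc _ hm ω _ hsin hcos hpoly,
    hD1, hD2, hQβ]
  ring

/-- For `β ≤ 0` the convolution `v(hβ) = ∑ C_γ G_m(hβ − hγ)` equals
`−D₁ sin(hωβ) − D₂ cos(hωβ) − Q(hβ)`. -/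
theorem convolution_left_of_nodes
    (m N : ℕ) (hm : 2 ≤ m) (hN : 1 ≤ N) (h ω : ℝ) (hh : h = 1 / N) (hω : 0 < ω)
    (Cc : ℕ → ℝ)
    (hsin : ∑ γ ∈ Finset.range (N + 1), Cc γ * Real.sin (h * ω * γ) = 0)
    (hcos : ∑ γ ∈ Finset.range (N + 1), Cc γ * Real.cos (h * ω * γ) = 0)
    (hpoly : ∀ α : ℕ, α + 3 ≤ m → ∑ γ ∈ Finset.range (N + 1), Cc γ * (h * γ) ^ α = 0)
    (D₁ D₂ : ℝ) (Q : ℝ → ℝ)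
    (hD1 : D₁ = (-1 : ℝ) ^ m / (4 * ω ^ (2 * m - 1)) *
        ∑ γ ∈ Finset.range (N + 1), Cc γ * (h * ω * γ) * Real.sin (h * ω * γ))
    (hD2 : D₂ = (-1 : ℝ) ^ m / (4 * ω ^ (2 * m - 1)) *
        ∑ γ ∈ Finset.range (N + 1), Cc γ * (h * ω * γ) * Real.cos (h * ω * γ))
    (hQ : ∀ t : ℝ, Q t = (-1 : ℝ) ^ m / (2 * ω ^ (2 * m - 1)) *
        ∑ k ∈ Finset.Icc (m / 2) (m - 2), ∑ α ∈ Finset.Icc (m - 2) (2 * k - 1),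
          (-1 : ℝ) ^ (k + α) * ((m : ℝ) - (k : ℝ) - 1) * ω ^ (2 * k - 1)
              / ((Nat.factorial (2 * k - 1 - α)) * (Nat.factorial α))
            * t ^ (2 * k - 1 - α)
            * ∑ γ ∈ Finset.range (N + 1), Cc γ * (h * γ) ^ α)
    :
    ∀ β : ℤ, β ≤ 0 →
      ∑ γ ∈ Finset.range (N + 1), Cc γ * Gm m ω (h * (β : ℝ) - h * γ)
        = -D₁ * Real.sin (h * ω * (β : ℝ)) - D₂ * Real.cos (h * ω * (β : ℝ)) - Q (h * (β : ℝ)) :=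
  convolution_left_of_nodes_general m N hm h ω hh Cc hsin hcos hpoly D₁ D₂ Q hD1 hD2 hQ
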